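/- arXiv:1804.10450 — 2 statements merged into one kernel-verified Lean document; each statement's English description precedes it below -/
import Mathlib

section
/- Let Y be a Banach space, let 𝓔 ⊆ Y* be a subset which is closed in the weak-* topology, and let ρ be an admissible weight function on 𝓔 (equipped with the weak-* topology), so that (𝓔, ρ) is a weighted space. Let 𝒵 be the set of bounded smooth cylinder functions on 𝓔, i.e. functions of the form λ ↦ g(⟨λ, y₁⟩, …, ⟨λ, y_N⟩) with N ∈ ℕ, g ∈ C_b^∞(ℝ^N) and y₁, …, y_N ∈ Y. Then the closure of 𝒵 in B^ρ(𝓔) equals 𝓑^ρ(𝓔); moreover, 𝓑^ρ(𝓔) consists exactly of those f ∈ B^ρ(𝓔) such that the restriction of f to K_R = {λ ∈ 𝓔 : ρ(λ) ≤ R} is weak-*-continuous for every R > 0 and lim_{R→∞} sup_{λ ∈ 𝓔 \ K_R} ρ(λ)⁻¹ |f(λ)| = 0. -/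
open MeasureTheory Filter Set Topology

namespace GenFeller

variable {X : Type*} [TopologicalSpace X]

/-- `ρ` is an admissible weight function on `X`: positive with compact sublevel sets. -/
def Admissible (ρ : X → ℝ) : Prop :=
  (∀ x, 0 < ρ x) ∧ ∀ R : ℝ, 0 < R → IsCompact {x : X | ρ x ≤ R}

/-- The weighted sup-norm `‖f‖_ρ = sup_x ρ(x)⁻¹ |f x|`. -/
noncomputable def rnorm (ρ : X → ℝ) (f : X → ℝ) : ℝ :=
  sSup (Set.range fun x => (ρ x)⁻¹ * |f x|)

/-- `f ∈ B^ρ(X)`. -/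
def MemB (ρ : X → ℝ) (f : X → ℝ) : Prop :=
  ∃ C : ℝ, ∀ x, |f x| ≤ C * ρ x

/-- `f ∈ 𝓑^ρ(X)`: `f ∈ B^ρ(X)` and `f` lies in the `‖·‖_ρ`-closure of the bounded
continuous functions. -/
def MemCb (ρ : X → ℝ) (f : X → ℝ) : Prop :=
  MemB ρ f ∧ ∀ ε : ℝ, 0 < ε → ∃ g : X → ℝ, Continuous g ∧ (∃ C : ℝ, ∀ x, |g x| ≤ C) ∧
    ∀ x, |f x - g x| ≤ ε * ρ x

/-- `T` is linear on `𝓑^ρ(X)`. -/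
def LinOn (ρ : X → ℝ) (T : (X → ℝ) → (X → ℝ)) : Prop :=
  (∀ f g, MemCb ρ f → MemCb ρ g → T (f + g) = T f + T g) ∧
  (∀ (c : ℝ) (f), MemCb ρ f → T (c • f) = c • T f)

/-- `‖T f‖_ρ ≤ C ‖f‖_ρ` for all `f ∈ 𝓑^ρ(X)`, stated pointwise. -/
def OpBound (ρ : X → ℝ) (T : (X → ℝ) → (X → ℝ)) (C : ℝ) : Prop :=
  ∀ f, MemCb ρ f → ∀ x, |T f x| ≤ C * rnorm ρ f * ρ x

/-- A generalized Feller semigroup on `𝓑^ρ(X)` (properties F1–F5). -/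
structure IsGenFeller (ρ : X → ℝ) (P : ℝ → (X → ℝ) → (X → ℝ)) : Prop where
  maps : ∀ t, 0 ≤ t → ∀ f, MemCb ρ f → MemCb ρ (P t f)
  lin : ∀ t, 0 ≤ t → LinOn ρ (P t)
  id0 : ∀ f, MemCb ρ f → P 0 f = f
  law : ∀ s t, 0 ≤ s → 0 ≤ t → ∀ f, MemCb ρ f → P (t + s) f = P t (P s f)
  ptconv : ∀ f, MemCb ρ f → ∀ x,
    Tendsto (fun t => P t f x) (nhdsWithin 0 (Set.Ioi 0)) (nhds (f x))
  locbdd : ∃ C : ℝ, ∃ ε : ℝ, 0 < ε ∧ ∀ t ∈ Set.Icc (0:ℝ) ε, OpBound ρ (P t) C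
  pos : ∀ t, 0 ≤ t → ∀ f, MemCb ρ f → (∀ x, 0 ≤ f x) → ∀ x, 0 ≤ P t f x

/-- `‖P_t‖ ≤ M exp(ω t)` for all `t ≥ 0`. -/
def GrowthBound (ρ : X → ℝ) (P : ℝ → (X → ℝ) → (X → ℝ)) (M ω : ℝ) : Prop :=
  ∀ t, 0 ≤ t → OpBound ρ (P t) (M * Real.exp (ω * t))

/-- `g` is the value of the generator of `P` at `f` (limit in `‖·‖_ρ`). -/
def IsGenerator (ρ : X → ℝ) (P : ℝ → (X → ℝ) → (X → ℝ)) (f g : X → ℝ) : Prop :=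
  MemCb ρ f ∧ MemCb ρ g ∧
  Tendsto (fun t : ℝ => rnorm ρ (fun x => t⁻¹ * (P t f x - f x) - g x))
    (nhdsWithin 0 (Set.Ioi 0)) (nhds 0)

/-- `D` is a set of elements of `𝓑^ρ(X)` which is `‖·‖_ρ`-dense in it. -/
def DenseIn (ρ : X → ℝ) (D : Set (X → ℝ)) : Prop :=
  (∀ f ∈ D, MemCb ρ f) ∧
  ∀ f, MemCb ρ f → ∀ ε : ℝ, 0 < ε → ∃ h ∈ D, rnorm ρ (fun x => f x - h x) ≤ ε

/-- Operator norm of a linear functional on `𝓑^ρ(X)`. -/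
noncomputable def opNormF (ρ : X → ℝ) (ℓ : (X → ℝ) → ℝ) : ℝ :=
  sSup {r : ℝ | ∃ f, MemCb ρ f ∧ rnorm ρ f ≤ 1 ∧ r = |ℓ f|}

/-- Operator norm of an operator on `𝓑^ρ(X)`. -/
noncomputable def opNormOp (ρ : X → ℝ) (B : (X → ℝ) → (X → ℝ)) : ℝ :=
  sSup {r : ℝ | ∃ f, MemCb ρ f ∧ rnorm ρ f ≤ 1 ∧ r = rnorm ρ (B f)}

end GenFeller

open GenFeller Filter Set

variable {Y : Type*} [NormedAddCommGroup Y] [NormedSpace ℝ Y]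

/-- The set of bounded smooth cylinder functions on `E ⊆ Y*` (with the weak-*
topology): functions `λ ↦ g(⟨λ, y₁⟩, …, ⟨λ, y_N⟩)` with `g ∈ C_b^∞(ℝ^N)`. -/
def CylFuns (E : Set (WeakDual ℝ Y)) : Set ((↥E) → ℝ) :=
  { f | ∃ (N : ℕ) (g : (Fin N → ℝ) → ℝ) (y : Fin N → Y),
      ContDiff ℝ (⊤ : ℕ∞) g ∧ (∃ C : ℝ, ∀ v, |g v| ≤ C) ∧
      ∀ lam : ↥E, f lam = g (fun i => (lam : WeakDual ℝ Y) (y i)) }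


section AuxLemmas

variable {X : Type*} [TopologicalSpace X]

lemma memCb_continuousOn {ρ : X → ℝ} (hpos : ∀ x, 0 < ρ x)
    {f : X → ℝ} (hf : MemCb ρ f) {R : ℝ} (hR : 0 < R) :
    ContinuousOn f {x | ρ x ≤ R} := by
  intro x hx
  have : Tendsto f (nhdsWithin x {x | ρ x ≤ R}) (nhds (f x)) := by
    rw [Metric.tendsto_nhds]
    intro ε hε
    obtain ⟨g, hgc, _, hfg⟩ := hf.2 (ε / 4 / R) (by positivity)
    have key : ∀ x' ∈ {x : X | ρ x ≤ R}, |f x' - g x'| ≤ ε / 4 := by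
      intro x' hx'
      refine (hfg x').trans ?_
      have h1 : ρ x' ≤ R := hx'
      have h2 : 0 < ρ x' := hpos x'
      rw [div_mul_eq_mul_div, div_le_iff₀ hR] at *
      nlinarith
    have hg' : Tendsto g (nhdsWithin x {x | ρ x ≤ R}) (nhds (g x)) :=
      (hgc.tendsto x).mono_left nhdsWithin_le_nhds
    have E1 : ∀ᶠ x' in nhdsWithin x {x | ρ x ≤ R}, dist (g x') (g x) < ε / 4 :=
      Metric.tendsto_nhds.mp hg' (ε / 4) (by positivity)
    have E2 : ∀ᶠ x' in nhdsWithin x {x | ρ x ≤ R}, x' ∈ {x : X | ρ x ≤ R} :=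
      self_mem_nhdsWithin
    filter_upwards [E1, E2] with x' h1 h2
    have k1 := key x' h2
    have k2 := key x hx
    rw [Real.dist_eq] at *
    have : |f x' - f x| ≤ |f x' - g x'| + |g x' - g x| + |g x - f x| := by
      have := abs_sub_abs_le_abs_sub (f x') (f x)
      calc |f x' - f x| = |(f x' - g x') + (g x' - g x) + (g x - f x)| := by ring_nf
        _ ≤ _ := by
          refine (abs_add_le _ _).trans ?_
          exact add_le_add (abs_add_le _ _) le_rfl
    have h3 : |g x - f x| = |f x - g x| := abs_sub_comm _ _
    linarith
  exact this

lemma memCb_decay {ρ : X → ℝ} (hpos : ∀ x, 0 < ρ x) {f : X → ℝ} (hf : MemCb ρ f) :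
    ∀ ε : ℝ, 0 < ε → ∃ R : ℝ, 0 < R ∧ ∀ x, R < ρ x → (ρ x)⁻¹ * |f x| ≤ ε := by
  intro ε hε
  obtain ⟨g, _, ⟨C, hC⟩, hfg⟩ := hf.2 (ε / 2) (by positivity)
  refine ⟨max 1 (2 * C / ε), lt_of_lt_of_le one_pos (le_max_left _ _), ?_⟩
  intro x hx
  have hρ := hpos x
  have hCx : |g x| ≤ C := hC x
  have hC0 : 0 ≤ C := (abs_nonneg _).trans hCx
  have hRC : 2 * C / ε ≤ max 1 (2 * C / ε) := le_max_right _ _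
  have h2C : 2 * C ≤ max 1 (2 * C / ε) * ε := by
    rw [div_le_iff₀ hε] at hRC; exact hRC
  have habs : |f x| ≤ ε * ρ x := by
    have h1 : |f x| ≤ |f x - g x| + |g x| := by
      calc |f x| = |(f x - g x) + g x| := by ring_nf
        _ ≤ _ := abs_add_le _ _
    have h2 := hfg x
    nlinarith [hx, lt_of_le_of_lt hRC hx]
  have hinv : (ρ x)⁻¹ * ρ x = 1 := inv_mul_cancel₀ hρ.ne'
  nlinarith [mul_le_mul_of_nonneg_left habs (inv_nonneg.mpr hρ.le)]


end AuxLemmas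

section CylAux

lemma proj_contDiff {N M : ℕ} (φ : Fin M → Fin N) :
    ContDiff ℝ (⊤ : ℕ∞) (fun v : Fin N → ℝ => fun i => v (φ i)) :=
  contDiff_pi.2 fun i =>
    (ContinuousLinearMap.proj (R := ℝ) (φ := fun _ : Fin N => ℝ) (φ i)).contDiff

def cylAlg (E : Set (WeakDual ℝ Y)) (K : Set (↥E)) : Subalgebra ℝ C(↥K, ℝ) where
  carrier := {h | ∃ (N : ℕ) (g : (Fin N → ℝ) → ℝ) (y : Fin N → Y), ContDiff ℝ (⊤ : ℕ∞) g ∧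
    ∀ k : ↥K, h k = g (fun i => ((k : ↥E) : WeakDual ℝ Y) (y i))}
  mul_mem' := by
    rintro h₁ h₂ ⟨N₁, g₁, y₁, hg₁, hr₁⟩ ⟨N₂, g₂, y₂, hg₂, hr₂⟩
    refine ⟨N₁ + N₂,
      fun v => g₁ (fun i => v (Fin.castAdd N₂ i)) * g₂ (fun j => v (Fin.natAdd N₁ j)),
      Fin.append y₁ y₂,
      (hg₁.comp (proj_contDiff _)).mul (hg₂.comp (proj_contDiff _)), fun k => ?_⟩
    simp only [ContinuousMap.mul_apply, hr₁ k, hr₂ k, Fin.append_left, Fin.append_right]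
  add_mem' := by
    rintro h₁ h₂ ⟨N₁, g₁, y₁, hg₁, hr₁⟩ ⟨N₂, g₂, y₂, hg₂, hr₂⟩
    refine ⟨N₁ + N₂,
      fun v => g₁ (fun i => v (Fin.castAdd N₂ i)) + g₂ (fun j => v (Fin.natAdd N₁ j)),
      Fin.append y₁ y₂,
      (hg₁.comp (proj_contDiff _)).add (hg₂.comp (proj_contDiff _)), fun k => ?_⟩
    simp only [ContinuousMap.add_apply, hr₁ k, hr₂ k, Fin.append_left, Fin.append_right]
  one_mem' := ⟨0, fun _ => 1, fun _ => 0, contDiff_const, fun k => by simp⟩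
  zero_mem' := ⟨0, fun _ => 0, fun _ => 0, contDiff_const, fun k => by simp⟩
  algebraMap_mem' := fun r =>
    ⟨0, fun _ => r, fun _ => 0, contDiff_const, fun k => by simp⟩

lemma cylAlg_separates (E : Set (WeakDual ℝ Y)) (K : Set (↥E)) :
    (cylAlg E K).SeparatesPoints := by
  intro k₁ k₂ hk
  have h1 : ((k₁ : ↥E) : WeakDual ℝ Y) ≠ ((k₂ : ↥E) : WeakDual ℝ Y) := by
    intro h
    exact hk (Subtype.ext (Subtype.ext h))
  obtain ⟨y, hy⟩ := DFunLike.ne_iff.mp h1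
  refine ⟨fun k : ↥K => ((k : ↥E) : WeakDual ℝ Y) y, ⟨⟨fun k => ((k : ↥E) : WeakDual ℝ Y) y,
    ((WeakDual.eval_continuous y).comp continuous_subtype_val).comp continuous_subtype_val⟩,
    ⟨1, fun v => v 0, fun _ => y,
      (ContinuousLinearMap.proj (R := ℝ) (φ := fun _ : Fin 1 => ℝ) 0).contDiff,
      fun k => rfl⟩, rfl⟩, hy⟩

lemma admissible_lb {X : Type*} [TopologicalSpace X] [T2Space X] [Nonempty X] {ρ : X → ℝ}
    (hρ : Admissible ρ) : ∃ δ : ℝ, 0 < δ ∧ ∀ x, δ ≤ ρ x := by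
  by_contra h
  push_neg at h
  set t : ℕ → Set X := fun n => {x | ρ x ≤ 1 / (n + 1)} with ht
  have hne : ∀ n : ℕ, (t n).Nonempty := by
    intro n
    obtain ⟨x, hx⟩ := h (1 / (n + 1)) (by positivity)
    exact ⟨x, hx.le⟩
  have hcomp : ∀ n : ℕ, IsCompact (t n) := fun n => hρ.2 _ (by positivity)
  have hmono : ∀ n : ℕ, t (n + 1) ⊆ t n := by
    intro n x hx
    simp only [ht, mem_setOf_eq] at hx ⊢
    refine hx.trans ?_
    apply one_div_le_one_div_of_le (by positivity)
    push_cast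
    linarith
  obtain ⟨x, hx⟩ := IsCompact.nonempty_iInter_of_sequence_nonempty_isCompact_isClosed
    t hmono hne (hcomp 0) (fun n => (hcomp n).isClosed)
  obtain ⟨n, hn⟩ := exists_nat_one_div_lt (hρ.1 x)
  have := mem_iInter.mp hx n
  simp only [ht, mem_setOf_eq] at this
  exact absurd this (not_le.mpr hn)


/-- Analytic bounded truncation: `θ s = s / (1 + (s/M)^(2k))`. -/
lemma analytic_trunc (L : ℝ) (hL : 0 < L) {η : ℝ} (hη : 0 < η) :
    ∃ θ : ℝ → ℝ, ContDiff ℝ (⊤ : ℕ∞) θ ∧ (∀ s : ℝ, |θ s| ≤ L + 1) ∧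
      ∀ s : ℝ, |s| ≤ L → |θ s - s| ≤ η := by
  set M := L + 1 with hMdef
  have hM : 0 < M := by linarith
  have hLM : L / M < 1 := (div_lt_one hM).mpr (by linarith)
  have hLM0 : 0 ≤ L / M := by positivity
  obtain ⟨n, hn⟩ := exists_pow_lt_of_lt_one (show 0 < η / (L + 1) by positivity) hLM
  set k := n + 1 with hkdef
  have hden : ∀ s : ℝ, 0 < 1 + (s / M) ^ (2 * k) := by
    intro s
    have : (0:ℝ) ≤ (s / M) ^ (2 * k) := by
      rw [pow_mul]
      exact pow_nonneg (sq_nonneg _) _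
    linarith
  refine ⟨fun s => s / (1 + (s / M) ^ (2 * k)), ?_, ?_, ?_⟩
  · exact contDiff_id.div ((contDiff_const.add ((contDiff_id.div_const M).pow (2 * k))))
      (fun s => (hden s).ne')
  · intro s
    have hd := hden s
    rw [abs_div, abs_of_pos hd, div_le_iff₀ hd]
    have habs : |s / M| ^ (2 * k) = (s / M) ^ (2 * k) := by
      rw [pow_mul, pow_mul, sq_abs]
    rcases le_or_gt |s| M with h | h
    · have hv0 : (0:ℝ) ≤ (s / M) ^ (2 * k) := by
        rw [pow_mul]; exact pow_nonneg (sq_nonneg _) _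
      nlinarith [mul_nonneg hM.le hv0]
    · have h1 : (1:ℝ) ≤ |s| / M := by rw [le_div_iff₀ hM]; linarith
      have h2 : |s| / M ≤ (|s| / M) ^ (2 * k) := by
        refine le_self_pow₀ h1 ?_
        positivity
      have h3 : |s| ≤ M * (|s| / M) ^ (2 * k) := by
        have := mul_le_mul_of_nonneg_left h2 hM.le
        rwa [mul_div_cancel₀ _ hM.ne'] at this
      have h4 : (|s| / M) ^ (2 * k) = (s / M) ^ (2 * k) := by
        rw [abs_div, abs_of_pos hM] at habs
        exact habs
      rw [h4] at h3
      nlinarith [hden s]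
  · intro s hs
    set v := (s / M) ^ (2 * k) with hvdef
    have hv0 : (0:ℝ) ≤ v := by
      rw [hvdef, pow_mul]; exact pow_nonneg (sq_nonneg _) _
    have hd : (0:ℝ) < 1 + v := hden s
    have heq : (fun s => s / (1 + (s / M) ^ (2 * k))) s - s = -(s * v) / (1 + v) := by
      show s / (1 + v) - s = -(s * v) / (1 + v)
      field_simp
      ring
    rw [heq, abs_div, abs_of_pos hd, abs_neg, abs_mul]
    have hvb : |v| ≤ (L / M) ^ (2 * k) := by
      rw [hvdef, abs_pow, abs_div, abs_of_pos hM]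
      refine pow_le_pow_left₀ (by positivity) ?_ _
      exact div_le_div_of_nonneg_right hs hM.le
    have h5 : |s| * |v| ≤ L * (L / M) ^ (2 * k) :=
      mul_le_mul hs hvb (abs_nonneg _) hL.le
    have h6 : (L / M) ^ (2 * k) ≤ (L / M) ^ n := by
      apply pow_le_pow_of_le_one hLM0 hLM.le
      omega
    have h7 : L * (L / M) ^ n ≤ (L + 1) * (η / (L + 1)) := by
      have := mul_le_mul_of_nonneg_left hn.le (show (0:ℝ) ≤ L + 1 by linarith)
      nlinarith [pow_nonneg hLM0 n]
    have h8 : (L + 1) * (η / (L + 1)) = η := by field_simp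
    rw [div_le_iff₀ hd]
    nlinarith [pow_nonneg hLM0 n, pow_nonneg hLM0 (2*k)]

lemma cyl_approx {E : Set (WeakDual ℝ Y)} {ρ : ↥E → ℝ} (hρ : Admissible ρ)
    {f : ↥E → ℝ} (hB : MemB ρ f)
    (hcont : ∀ R : ℝ, 0 < R → ContinuousOn f {lam : ↥E | ρ lam ≤ R})
    (hdec : ∀ ε : ℝ, 0 < ε → ∃ R : ℝ, 0 < R ∧
      ∀ lam : ↥E, R < ρ lam → (ρ lam)⁻¹ * |f lam| ≤ ε)
    {ε : ℝ} (hε : 0 < ε) : ∃ z ∈ CylFuns E, ∀ x, |f x - z x| ≤ ε * ρ x := by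
  cases isEmpty_or_nonempty ↥E with
  | inl hempty =>
    exact ⟨fun _ => 0, ⟨0, fun _ => 0, fun _ => (0 : Y), contDiff_const,
      ⟨0, fun v => by simp⟩, fun lam => hempty.elim lam⟩, fun x => hempty.elim x⟩
  | inr hne =>
    obtain ⟨δ, hδpos, hδ⟩ := admissible_lb hρ
    obtain ⟨C₀, hC₀⟩ := hB
    set C := max C₀ 1 with hCdef
    have hC1 : 1 ≤ C := le_max_right _ _
    have hC : ∀ x, |f x| ≤ C * ρ x := fun x =>
      (hC₀ x).trans (mul_le_mul_of_nonneg_right (le_max_left _ _) (hρ.1 x).le)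
    obtain ⟨R₀, hR₀pos, hdec₀⟩ := hdec (ε / 4) (by positivity)
    have hdecf : ∀ x, R₀ < ρ x → |f x| ≤ ε / 4 * ρ x := by
      intro x hx
      have h1 := mul_le_mul_of_nonneg_left (hdec₀ x hx) (hρ.1 x).le
      rw [← mul_assoc, mul_inv_cancel₀ (hρ.1 x).ne', one_mul] at h1
      linarith
    set R₁ := max R₀ (4 / ε * (C * R₀ + 3)) with hR₁def
    have hR₁pos : 0 < R₁ := lt_of_lt_of_le hR₀pos (le_max_left _ _)
    have hεR₁ : C * R₀ + 3 ≤ ε / 4 * R₁ := by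
      have h1 : 4 / ε * (C * R₀ + 3) ≤ R₁ := le_max_right _ _
      have h2 := mul_le_mul_of_nonneg_left h1 (le_of_lt (show (0:ℝ) < ε / 4 by positivity))
      have h3 : ε / 4 * (4 / ε * (C * R₀ + 3)) = C * R₀ + 3 := by
        field_simp
      linarith
    have hL3 : 3 ≤ ε / 4 * R₁ := by nlinarith [hR₀pos]
    set K := {x : ↥E | ρ x ≤ R₁} with hKdef
    have hK : IsCompact K := hρ.2 R₁ hR₁pos
    have hfK : ∀ x ∈ K, |f x| ≤ ε / 4 * R₁ := by
      intro x hx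
      rcases le_or_gt (ρ x) R₀ with h | h
      · have := (hC x).trans (mul_le_mul_of_nonneg_left h (by linarith : (0:ℝ) ≤ C))
        linarith
      · have h1 := hdecf x h
        have h2 : ρ x ≤ R₁ := hx
        nlinarith
    haveI : CompactSpace ↥K := isCompact_iff_compactSpace.mp hK
    obtain ⟨η, hηdef⟩ : ∃ η : ℝ, η = min 1 (ε / 4 * δ) := ⟨_, rfl⟩
    have hηpos : 0 < η := by
      rw [hηdef]; exact lt_min one_pos (by positivity)
    have hη1 : η ≤ 1 := by rw [hηdef]; exact min_le_left _ _
    have hηδ : η ≤ ε / 4 * δ := by rw [hηdef]; exact min_le_right _ _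
    have hfc : Continuous (K.restrict f) := (hcont R₁ hR₁pos).restrict
    obtain ⟨g₀, hg₀⟩ := ContinuousMap.exists_mem_subalgebra_near_continuous_of_separatesPoints
      (cylAlg E K) (cylAlg_separates E K) (K.restrict f) hfc η hηpos
    obtain ⟨N, g, y, hg, hrep⟩ := g₀.2
    obtain ⟨L, hLdef⟩ : ∃ L : ℝ, L = ε / 4 * R₁ + 1 := ⟨_, rfl⟩
    have hLpos : 0 < L := by rw [hLdef]; linarith
    obtain ⟨θ, hθsm, hθbd, hθcl⟩ := analytic_trunc L hLpos hηpos
    refine ⟨fun x : ↥E => θ (g (fun i => (x : WeakDual ℝ Y) (y i))),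
      ⟨N, fun v => θ (g v), y, hθsm.comp hg, ⟨L + 1, fun v => hθbd _⟩, fun lam => rfl⟩, ?_⟩
    intro x
    show |f x - θ (g (fun i => (x : WeakDual ℝ Y) (y i)))| ≤ ε * ρ x
    rcases le_or_gt (ρ x) R₁ with hx | hx
    · have hxK : x ∈ K := hx
      have h1 := hg₀ ⟨x, hxK⟩
      rw [hrep ⟨x, hxK⟩] at h1
      have h1' : |g (fun i => (x : WeakDual ℝ Y) (y i)) - f x| < η := by
        simpa [Real.norm_eq_abs, Set.restrict_apply, show K.restrict f ⟨x, hxK⟩ = f x from rfl] using h1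
      have h2 := hfK x hxK
      have hgb : |g (fun i => (x : WeakDual ℝ Y) (y i))| ≤ L := by
        have h4 : |g (fun i => (x : WeakDual ℝ Y) (y i))|
            ≤ |g (fun i => (x : WeakDual ℝ Y) (y i)) - f x| + |f x| := by
          calc |g (fun i => (x : WeakDual ℝ Y) (y i))|
              = |(g (fun i => (x : WeakDual ℝ Y) (y i)) - f x) + f x| := by ring_nf
            _ ≤ _ := abs_add_le _ _
        rw [hLdef]
        linarith
      have h5 := hθcl _ hgb
      have h6 : |f x - θ (g (fun i => (x : WeakDual ℝ Y) (y i)))|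
          ≤ |f x - g (fun i => (x : WeakDual ℝ Y) (y i))|
            + |θ (g (fun i => (x : WeakDual ℝ Y) (y i)))
                - g (fun i => (x : WeakDual ℝ Y) (y i))| := by
        calc |f x - θ (g (fun i => (x : WeakDual ℝ Y) (y i)))|
            = |(f x - g (fun i => (x : WeakDual ℝ Y) (y i)))
              + -(θ (g (fun i => (x : WeakDual ℝ Y) (y i)))
                - g (fun i => (x : WeakDual ℝ Y) (y i)))| := by ring_nf
          _ ≤ _ := by
              refine (abs_add_le _ _).trans ?_
              rw [abs_neg]
      have h7 : |f x - g (fun i => (x : WeakDual ℝ Y) (y i))| < η := by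
        rw [abs_sub_comm]; exact h1'
      have h8 := hδ x
      have h9 : 0 < ρ x := hρ.1 x
      nlinarith
    · have hfx := hdecf x (lt_of_le_of_lt (le_max_left _ _) hx)
      have hzx := hθbd (g (fun i => (x : WeakDual ℝ Y) (y i)))
      have h1 : |f x - θ (g (fun i => (x : WeakDual ℝ Y) (y i)))|
          ≤ |f x| + |θ (g (fun i => (x : WeakDual ℝ Y) (y i)))| := abs_sub _ _
      have h2 : L + 1 ≤ ε / 2 * ρ x := by
        have h3 : ε / 4 * R₁ ≤ ε / 4 * ρ x := by nlinarith
        rw [hLdef]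
        nlinarith
      nlinarith


lemma cyl_cont {E : Set (WeakDual ℝ Y)} {z : ↥E → ℝ} (hz : z ∈ CylFuns E) :
    Continuous z ∧ ∃ C : ℝ, ∀ x, |z x| ≤ C := by
  obtain ⟨N, g, y, hg, ⟨C, hC⟩, hrep⟩ := hz
  constructor
  · have : z = fun lam : ↥E => g (fun i => (lam : WeakDual ℝ Y) (y i)) := funext hrep
    rw [this]
    exact hg.continuous.comp (continuous_pi fun i =>
      (WeakDual.eval_continuous (y i)).comp continuous_subtype_val)
  · exact ⟨C, fun x => by rw [hrep x]; exact hC _⟩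


end CylAux

/-- Theorem 2.15: for a weak-*-closed set `E ⊆ Y*` and an admissible weight `ρ` on
`E`, the closure of the bounded smooth cylinder functions in `B^ρ(E)` is exactly
`𝓑^ρ(E)`; moreover `𝓑^ρ(E)` consists exactly of those `f ∈ B^ρ(E)` which are
weak-*-continuous on each sublevel set `K_R` and satisfy the decay condition
`lim_{R→∞} sup_{ρ(λ) > R} ρ(λ)⁻¹ |f(λ)| = 0`. -/

theorem cylinder_functions_dense
    (E : Set (WeakDual ℝ Y)) (hE : IsClosed E)
    (ρ : ↥E → ℝ) (hρ : Admissible ρ) :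
    ∀ f : ↥E → ℝ,
      ((MemB ρ f ∧ ∀ ε : ℝ, 0 < ε → ∃ z ∈ CylFuns E, ∀ x, |f x - z x| ≤ ε * ρ x)
          ↔ MemCb ρ f) ∧
      (MemCb ρ f ↔
        (MemB ρ f ∧
         (∀ R : ℝ, 0 < R → ContinuousOn f {lam : ↥E | ρ lam ≤ R}) ∧
         (∀ ε : ℝ, 0 < ε → ∃ R : ℝ, 0 < R ∧
            ∀ lam : ↥E, R < ρ lam → (ρ lam)⁻¹ * |f lam| ≤ ε))) := by
  intro f
  have hiff1 : (MemB ρ f ∧ ∀ ε : ℝ, 0 < ε → ∃ z ∈ CylFuns E, ∀ x, |f x - z x| ≤ ε * ρ x)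
      ↔ MemCb ρ f := by
    constructor
    · rintro ⟨hB, hap⟩
      refine ⟨hB, fun ε hε => ?_⟩
      obtain ⟨z, hzmem, hz⟩ := hap ε hε
      obtain ⟨hzc, hzb⟩ := cyl_cont hzmem
      exact ⟨z, hzc, hzb, hz⟩
    · intro hf
      exact ⟨hf.1, fun ε hε => cyl_approx hρ hf.1
        (fun R hR => memCb_continuousOn hρ.1 hf hR) (memCb_decay hρ.1 hf) hε⟩
  refine ⟨hiff1, ?_, ?_⟩
  · intro hf
    exact ⟨hf.1, fun R hR => memCb_continuousOn hρ.1 hf hR, memCb_decay hρ.1 hf⟩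
  · rintro ⟨hB, hcont, hdec⟩
    exact hiff1.mp ⟨hB, fun ε hε => cyl_approx hρ hB hcont hdec hε⟩
end

section
/- Let (P^n_t)_{t≥0}, n ∈ ℕ, be strongly continuous semigroups on a Banach space Z with generators A^n, and suppose there are uniform constants M ≥ 1 and ω ∈ ℝ with ‖P^n_t‖_{L(Z)} ≤ M exp(ωt) for all t ≥ 0 and all n. Let D ⊆ ∩_n dom(A^n) be a dense subspace such that: (i) D is invariant under all P^n_t; (ii) there is a norm ‖·‖_D on D and constants M_D ≥ 1, ω_D ∈ ℝ with ‖P^n_t f‖_D ≤ M_D exp(ω_D t) ‖f‖_D for all t ≥ 0, n, f ∈ D; (iii) there are numbers a_{nm} with a_{nm} → 0 as n, m → ∞ and ‖A^n f − A^m f‖ ≤ a_{nm} ‖f‖_D for all f ∈ D and all n, m. Then there exists a strongly continuous semigroup (P^∞_t)_{t≥0} on Z with ‖P^∞_t‖_{L(Z)} ≤ M exp(ωt) such that lim_{n→∞} P^n_t f = P^∞_t f for every f ∈ Z, uniformly on compact intervals in t and on bounded subsets of D; moreover there is a locally bounded function t ↦ C_t such that ‖P^n_t f − P^m_t f‖ ≤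 C_t a_{nm} ‖f‖_D for all f ∈ D. If in addition Z = 𝓑^ρ(X) for a weighted space (X, ρ) and every (P^n_t) is a generalized Feller semigroup, then (P^∞_t) is a generalized Feller semigroup. -/
open MeasureTheory Filter Set Topology

open Filter Set

universe u v

/-!
For `f ∈ D` the map `r ↦ P^m_{t-r} P^n_r f` on `[0, t]` has right derivative
`P^m_{t-r} (A^n - A^m) P^n_r f`, so the mean value inequality, the invariance of `D` and the two
growth bounds give `‖P^n_t f - P^m_t f‖ ≤ C_t a_{nm} ‖f‖_D`. Hence `P^n_t f` is uniformly Cauchy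
for `t` in compact intervals, first for `f ∈ D` and then, by the uniform bound `M e^{ωt}` and
density, for every `f`. The pointwise limits are bounded operators (Banach–Steinhaus) that inherit
the semigroup law and the growth bound, and strong continuity survives the uniform limit in `t`.
Positivity passes to the limit because point evaluations are continuous on `𝓑^ρ(X)`.
-/

open Topology

section Semigroup

variable {E : Type*} [NormedAddCommGroup E] [NormedSpace ℝ E]

structure IsC0Semigroup (S : ℝ → E →L[ℝ] E) : Prop where
  map_zero : S 0 = ContinuousLinearMap.id ℝ E
  map_add : ∀ s t, 0 ≤ s → 0 ≤ t → S (t + s) = (S t).comp (S s)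
  tendsto_nhdsGT : ∀ x, Tendsto (fun t => S t x) (𝓝[>] 0) (𝓝 x)

def HasGeneratorAt (S : ℝ → E →L[ℝ] E) (a x : E) : Prop :=
  Tendsto (fun t : ℝ => t⁻¹ • (S t x - x)) (𝓝[>] 0) (𝓝 a)

lemma exp_mul_le_exp_abs_mul {ω t T : ℝ} (ht : t ∈ Icc 0 T) :
    Real.exp (ω * t) ≤ Real.exp (|ω| * T) :=
  Real.exp_le_exp.2 <| (mul_le_mul_of_nonneg_right (le_abs_self ω) ht.1).trans
    (mul_le_mul_of_nonneg_left ht.2 (abs_nonneg ω))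

noncomputable def comparisonConst (M ω MD ωD t : ℝ) : ℝ :=
  M * Real.exp (|ω| * t) * (MD * Real.exp (|ωD| * t)) * t

lemma comparisonConst_mono {M ω MD ωD t T : ℝ} (hM : 0 ≤ M) (hMD : 0 ≤ MD) (ht : t ∈ Icc 0 T) :
    comparisonConst M ω MD ωD t ≤ comparisonConst M ω MD ωD T := by
  have := ht.1
  unfold comparisonConst
  gcongr
  exacts [ht.2, ht.2, ht.2]

lemma comparisonConst_mul_le {M ω MD ωD t T x K : ℝ} (hM : 0 ≤ M) (hMD : 0 ≤ MD)
    (ht : t ∈ Icc 0 T) (hx : 0 ≤ x) (hxK : x ≤ K) (α : ℝ) :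
    comparisonConst M ω MD ωD t * α * x ≤ comparisonConst M ω MD ωD T * K * |α| := by
  have hCt : 0 ≤ comparisonConst M ω MD ωD t := by
    have := ht.1
    unfold comparisonConst
    positivity
  have hCT := comparisonConst_mono (ω := ω) (ωD := ωD) hM hMD ht
  calc comparisonConst M ω MD ωD t * α * x ≤ comparisonConst M ω MD ωD t * |α| * x := by
        gcongr; exact le_abs_self α
    _ ≤ comparisonConst M ω MD ωD T * |α| * K := by
        gcongr; exact mul_nonneg (hCt.trans hCT) (abs_nonneg α)
    _ = comparisonConst M ω MD ωD T * K * |α| := by ring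

variable {S T : ℝ → E →L[ℝ] E} {M ω M' ω' : ℝ}

lemma nonneg_of_norm_le_mul_exp (hb : ∀ t, 0 ≤ t → ‖S t‖ ≤ M * Real.exp (ω * t)) : 0 ≤ M := by
  simpa using (norm_nonneg _).trans (hb 0 le_rfl)

lemma norm_le_mul_exp_abs_of_mem_Icc (hb : ∀ t, 0 ≤ t → ‖S t‖ ≤ M * Real.exp (ω * t))
    {t T : ℝ} (ht : t ∈ Icc 0 T) : ‖S t‖ ≤ M * Real.exp (|ω| * T) :=
  (hb t ht.1).trans <|
    mul_le_mul_of_nonneg_left (exp_mul_le_exp_abs_mul ht) (nonneg_of_norm_le_mul_exp hb)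

namespace IsC0Semigroup

lemma apply_zero (hS : IsC0Semigroup S) (x : E) : S 0 x = x := by
  rw [hS.map_zero]; rfl

lemma apply_add (hS : IsC0Semigroup S) {s t : ℝ} (hs : 0 ≤ s) (ht : 0 ≤ t) (x : E) :
    S (t + s) x = S t (S s x) := by
  rw [hS.map_add s t hs ht]; rfl

lemma tendsto_nhdsGE (hS : IsC0Semigroup S) (x : E) :
    Tendsto (fun t => S t x) (𝓝[≥] 0) (𝓝 x) := by
  have h : ContinuousWithinAt (fun t => S t x) (Ioi 0) 0 := by
    simpa [ContinuousWithinAt, hS.apply_zero] using hS.tendsto_nhdsGT x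
  simpa [ContinuousWithinAt, hS.apply_zero] using continuousWithinAt_Ioi_iff_Ici.1 h

lemma tendsto_apply_sub_nhdsGE (hS : IsC0Semigroup S) (x : E) {s : ℝ} :
    Tendsto (fun t => S (t - s) x) (𝓝[≥] s) (𝓝 x) := by
  refine (hS.tendsto_nhdsGE x).comp (tendsto_nhdsWithin_iff.2 ⟨?_, ?_⟩)
  · exact ((continuous_id.sub continuous_const).tendsto' s 0 (sub_self s)).mono_left
      nhdsWithin_le_nhds
  · exact eventually_nhdsWithin_of_forall fun t ht => mem_Ici.2 (sub_nonneg.2 ht)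

lemma continuousOn_orbit (hS : IsC0Semigroup S)
    (hb : ∀ t, 0 ≤ t → ‖S t‖ ≤ M * Real.exp (ω * t)) (x : E) :
    ContinuousOn (fun t => S t x) (Ici 0) := by
  intro s (hs : 0 ≤ s)
  rw [← Icc_union_Ici_eq_Ici hs]
  refine ContinuousWithinAt.union ?_ ?_
  · -- `S t x - S s x = S t (x - S (s - t) x)`, with `‖S t‖` bounded on `[0, s]`
    rw [ContinuousWithinAt, tendsto_iff_norm_sub_tendsto_zero]
    have hlim : Tendsto (fun t => S (s - t) x) (𝓝[Icc 0 s] s) (𝓝 x) := by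
      refine (hS.tendsto_nhdsGE x).comp (tendsto_nhdsWithin_iff.2 ⟨?_, ?_⟩)
      · exact ((continuous_const.sub continuous_id).tendsto' s 0 (sub_self s)).mono_left
          nhdsWithin_le_nhds
      · exact eventually_nhdsWithin_of_forall fun t ht => mem_Ici.2 (sub_nonneg.2 ht.2)
    refine squeeze_zero' (Eventually.of_forall fun _ => norm_nonneg _)
      (eventually_nhdsWithin_of_forall fun t ht => ?_)
      (by simpa using ((tendsto_iff_norm_sub_tendsto_zero.1 hlim).const_mul
        (M * Real.exp (|ω| * s))))
    calc ‖S t x - S s x‖ = ‖S t (x - S (s - t) x)‖ := by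
          rw [map_sub, ← hS.apply_add (sub_nonneg.2 ht.2) ht.1, add_sub_cancel]
      _ ≤ M * Real.exp (|ω| * s) * ‖S (s - t) x - x‖ := by
          rw [norm_sub_rev]
          exact (S t).le_of_opNorm_le (norm_le_mul_exp_abs_of_mem_Icc hb ht) _
  · refine (hS.tendsto_apply_sub_nhdsGE (S s x)).congr'
      (eventually_nhdsWithin_of_forall fun t ht => ?_)
    rw [← hS.apply_add hs (sub_nonneg.2 ht), sub_add_cancel]

lemma continuousOn_uncurry (hS : IsC0Semigroup S)
    (hb : ∀ t, 0 ≤ t → ‖S t‖ ≤ M * Real.exp (ω * t)) :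
    ContinuousOn (fun p : ℝ × E => S p.1 p.2) (Ici 0 ×ˢ univ) := by
  rintro ⟨s, x⟩ ⟨hs, -⟩
  rw [ContinuousWithinAt, tendsto_iff_norm_sub_tendsto_zero]
  have horbit : Tendsto (fun p : ℝ × E => S p.1 x) (𝓝[Ici 0 ×ˢ univ] (s, x)) (𝓝 (S s x)) :=
    (hS.continuousOn_orbit hb x s hs).tendsto.comp <|
      tendsto_nhdsWithin_iff.2 ⟨continuousAt_fst.tendsto.mono_left nhdsWithin_le_nhds,
        eventually_nhdsWithin_of_forall fun p hp => hp.1⟩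
  have hsnd : Tendsto (fun p : ℝ × E => p.2) (𝓝[Ici 0 ×ˢ univ] (s, x)) (𝓝 x) :=
    continuousAt_snd.tendsto.mono_left nhdsWithin_le_nhds
  have hnear : ∀ᶠ p : ℝ × E in 𝓝[Ici 0 ×ˢ univ] (s, x), p.1 ∈ Icc 0 (s + 1) := by
    filter_upwards [self_mem_nhdsWithin,
      nhdsWithin_le_nhds (continuousAt_fst.eventually (gt_mem_nhds (lt_add_one s)))]
      with p hp hp1 using ⟨hp.1, hp1.le⟩
  refine squeeze_zero' (Eventually.of_forall fun _ => norm_nonneg _)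
    (hnear.mono fun p hp => ?_)
    (by simpa using ((tendsto_iff_norm_sub_tendsto_zero.1 hsnd).const_mul
      (M * Real.exp (|ω| * (s + 1)))).add (tendsto_iff_norm_sub_tendsto_zero.1 horbit))
  calc ‖S p.1 p.2 - S s x‖ = ‖S p.1 (p.2 - x) + (S p.1 x - S s x)‖ := by
        rw [map_sub]; abel_nf
    _ ≤ M * Real.exp (|ω| * (s + 1)) * ‖p.2 - x‖ + ‖S p.1 x - S s x‖ :=
        (norm_add_le _ _).trans <| add_le_add_left
          ((S p.1).le_of_opNorm_le (norm_le_mul_exp_abs_of_mem_Icc hb hp) _) _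

lemma continuousOn_interpolate (hS : IsC0Semigroup S)
    (hbS : ∀ t, 0 ≤ t → ‖S t‖ ≤ M' * Real.exp (ω' * t)) (hT : IsC0Semigroup T)
    (hbT : ∀ t, 0 ≤ t → ‖T t‖ ≤ M * Real.exp (ω * t)) (t : ℝ) (f : E) :
    ContinuousOn (fun r => T (t - r) (S r f)) (Icc 0 t) :=
  (hT.continuousOn_uncurry hbT).comp
    ((continuousOn_const.sub continuousOn_id).prodMk
      ((hS.continuousOn_orbit hbS f).mono Icc_subset_Ici_self))
    fun _ hr => ⟨mem_Ici.2 (sub_nonneg.2 hr.2), mem_univ _⟩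

lemma hasDerivWithinAt_interpolate (hS : IsC0Semigroup S) (hT : IsC0Semigroup T)
    (hbT : ∀ t, 0 ≤ t → ‖T t‖ ≤ M * Real.exp (ω * t)) {t r : ℝ} (hr : r ∈ Ico 0 t) {f a b : E}
    (ha : HasGeneratorAt S a (S r f)) (hb : HasGeneratorAt T b (S r f)) :
    HasDerivWithinAt (fun r => T (t - r) (S r f)) (T (t - r) (a - b)) (Ici r) r := by
  set u := S r f
  rw [hasDerivWithinAt_iff_tendsto_slope, Ici_sdiff_left]
  have hshift : Tendsto (fun y => y - r) (𝓝[>] r) (𝓝[>] 0) :=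
    tendsto_nhdsWithin_iff.2
      ⟨((continuous_id.sub continuous_const).tendsto' r 0 (sub_self r)).mono_left
        nhdsWithin_le_nhds,
      eventually_nhdsWithin_of_forall fun y hy => mem_Ioi.2 (sub_pos.2 hy)⟩
  have hq : Tendsto (fun y => (y - r)⁻¹ • (S (y - r) u - u) - (y - r)⁻¹ • (T (y - r) u - u))
      (𝓝[>] r) (𝓝 (a - b)) := (ha.comp hshift).sub (hb.comp hshift)
  have hlt : ∀ᶠ y in 𝓝[>] r, y ∈ Ioo r t :=
    inter_mem self_mem_nhdsWithin (nhdsWithin_le_nhds (gt_mem_nhds hr.2))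
  have hpair : Tendsto (fun y => (t - y, (y - r)⁻¹ • (S (y - r) u - u)
      - (y - r)⁻¹ • (T (y - r) u - u))) (𝓝[>] r) (𝓝[Ici 0 ×ˢ univ] (t - r, a - b)) :=
    tendsto_nhdsWithin_iff.2
      ⟨(((continuous_const.sub continuous_id).tendsto r).mono_left nhdsWithin_le_nhds).prodMk_nhds
        hq, hlt.mono fun y hy => ⟨mem_Ici.2 (sub_nonneg.2 hy.2.le), mem_univ _⟩⟩
  refine ((hT.continuousOn_uncurry hbT (t - r, a - b)
    ⟨mem_Ici.2 (sub_nonneg.2 hr.2.le), mem_univ _⟩).tendsto.comp hpair).congr' ?_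
  filter_upwards [hlt] with y hy
  have hyr : 0 ≤ y - r := sub_nonneg.2 hy.1.le
  have hS' : S y f = S (y - r) u := by rw [← hS.apply_add hr.1 hyr, sub_add_cancel]
  have hT' : T (t - r) u = T (t - y) (T (y - r) u) := by
    rw [← hT.apply_add hyr (sub_nonneg.2 hy.2.le), sub_add_sub_cancel]
  simp only [Function.comp_apply, slope_def_module, hS', ← smul_sub, sub_sub_sub_cancel_right]
  rw [show S r f = u from rfl, hT', ← map_sub, map_smul]

theorem norm_sub_le_of_generator_dist_le (hS : IsC0Semigroup S)
    (hbS : ∀ t, 0 ≤ t → ‖S t‖ ≤ M' * Real.exp (ω' * t)) (hT : IsC0Semigroup T)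
    (hbT : ∀ t, 0 ≤ t → ‖T t‖ ≤ M * Real.exp (ω * t)) {A B : E → E} {f : E} {t δ : ℝ}
    (ht : 0 ≤ t) (hA : ∀ r ∈ Ico 0 t, HasGeneratorAt S (A (S r f)) (S r f))
    (hB : ∀ r ∈ Ico 0 t, HasGeneratorAt T (B (S r f)) (S r f))
    (hδ : ∀ r ∈ Ico 0 t, ‖A (S r f) - B (S r f)‖ ≤ δ) :
    ‖S t f - T t f‖ ≤ M * Real.exp (|ω| * t) * δ * t := by
  have hderiv : ∀ r ∈ Ico 0 t, ‖T (t - r) (A (S r f) - B (S r f))‖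
      ≤ M * Real.exp (|ω| * t) * δ := fun r hr =>
    ((T (t - r)).le_of_opNorm_le (norm_le_mul_exp_abs_of_mem_Icc hbT
      ⟨sub_nonneg.2 hr.2.le, sub_le_self t hr.1⟩) _).trans <|
      mul_le_mul_of_nonneg_left (hδ r hr) (by
        have := nonneg_of_norm_le_mul_exp hbT; positivity)
  simpa [hS.apply_zero, hT.apply_zero] using
    norm_image_sub_le_of_norm_deriv_right_le_segment (hS.continuousOn_interpolate hbS hT hbT t f)
      (fun r hr => hS.hasDerivWithinAt_interpolate hT hbT hr (hA r hr) (hB r hr)) hderiv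
      t ⟨ht, le_rfl⟩

theorem norm_sub_le_of_generator_dist_le_seminorm (hS : IsC0Semigroup S)
    (hbS : ∀ t, 0 ≤ t → ‖S t‖ ≤ M' * Real.exp (ω' * t)) (hT : IsC0Semigroup T)
    (hbT : ∀ t, 0 ≤ t → ‖T t‖ ≤ M * Real.exp (ω * t)) {D : Set E} {nD : E → ℝ} {MD ωD α : ℝ}
    (hnD : ∀ f ∈ D, 0 ≤ nD f) (hMD : 0 ≤ MD) (hinv : ∀ t, 0 ≤ t → ∀ f ∈ D, S t f ∈ D)
    (hbD : ∀ t, 0 ≤ t → ∀ f ∈ D, nD (S t f) ≤ MD * Real.exp (ωD * t) * nD f)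
    {A B : E → E} (hA : ∀ f ∈ D, HasGeneratorAt S (A f) f)
    (hB : ∀ f ∈ D, HasGeneratorAt T (B f) f) (hAB : ∀ f ∈ D, ‖A f - B f‖ ≤ α * nD f)
    {t : ℝ} (ht : 0 ≤ t) {f : E} (hf : f ∈ D) :
    ‖S t f - T t f‖ ≤ comparisonConst M ω MD ωD t * α * nD f := by
  have hδ : ∀ r ∈ Ico 0 t, ‖A (S r f) - B (S r f)‖ ≤ α * (MD * Real.exp (|ωD| * t) * nD f) := by
    intro r hr
    have hu : S r f ∈ D := hinv r hr.1 f hf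
    have hnDu : nD (S r f) ≤ MD * Real.exp (|ωD| * t) * nD f :=
      (hbD r hr.1 f hf).trans <| mul_le_mul_of_nonneg_right (mul_le_mul_of_nonneg_left
        (exp_mul_le_exp_abs_mul ⟨hr.1, hr.2.le⟩) hMD) (hnD f hf)
    -- the sign of `α` is only known when `nD f > 0`; otherwise `nD` vanishes along the orbit
    rcases (hnD f hf).eq_or_lt with h0 | hpos
    · have hnDu0 : nD (S r f) = 0 := le_antisymm (by simpa [← h0] using hnDu) (hnD _ hu)
      simpa [hnDu0, ← h0] using hAB _ hu
    · have hα : 0 ≤ α := nonneg_of_mul_nonneg_left ((norm_nonneg _).trans (hAB f hf)) hpos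
      exact (hAB _ hu).trans (mul_le_mul_of_nonneg_left hnDu hα)
  calc ‖S t f - T t f‖ ≤ M * Real.exp (|ω| * t) * (α * (MD * Real.exp (|ωD| * t) * nD f)) * t :=
        hS.norm_sub_le_of_generator_dist_le hbS hT hbT ht (fun r hr => hA _ (hinv r hr.1 f hf))
          (fun r hr => hB _ (hinv r hr.1 f hf)) hδ
    _ = comparisonConst M ω MD ωD t * α * nD f := by unfold comparisonConst; ring

end IsC0Semigroup

end Semigroup

section Uniform

variable {E : Type*} [SeminormedAddCommGroup E]

lemma uniformCauchySeqOn_of_norm_sub_le {ι : Type*} {G : ℕ → ι → E} {s : Set ι}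
    {b : ℕ → ℕ → ℝ} (hb : Tendsto (fun p : ℕ × ℕ => b p.1 p.2) atTop (𝓝 0))
    (h : ∀ k l, ∀ i ∈ s, ‖G k i - G l i‖ ≤ b k l) : UniformCauchySeqOn G atTop s := by
  intro u hu
  obtain ⟨ε, hε, hεu⟩ := Metric.mem_uniformity_dist.1 hu
  rw [prod_atTop_atTop_eq]
  filter_upwards [hb.eventually (gt_mem_nhds hε)] with p hp i hi
  exact hεu ((dist_eq_norm _ _).trans_lt ((h _ _ i hi).trans_lt hp))

lemma TendstoUniformlyOn.exists_forall_norm_sub_le {ι : Type*} {G : ℕ → ι → E} {g : ι → E}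
    {s : Set ι} (h : TendstoUniformlyOn G g atTop s) {ε : ℝ} (hε : 0 < ε) :
    ∃ N, ∀ n ≥ N, ∀ i ∈ s, ‖G n i - g i‖ ≤ ε := by
  obtain ⟨N, hN⟩ := eventually_atTop.1 (Metric.tendstoUniformlyOn_iff.1 h ε hε)
  exact ⟨N, fun n hn i hi => by
    rw [← dist_eq_norm, dist_comm]; exact (hN n hn i hi).le⟩

end Uniform

section Operators

variable {E F : Type*} [NormedAddCommGroup E] [NormedSpace ℝ E]
  [NormedAddCommGroup F] [NormedSpace ℝ F]

lemma UniformCauchySeqOn.of_dense {ι : Type*} {Q : ℕ → ι → E →L[ℝ] F} {s : Set ι} {C : ℝ}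
    (hQ : ∀ k, ∀ i ∈ s, ‖Q k i‖ ≤ C) {D : Set E} (hD : Dense D)
    (h : ∀ y ∈ D, UniformCauchySeqOn (fun k i => Q k i y) atTop s) (x : E) :
    UniformCauchySeqOn (fun k i => Q k i x) atTop s := by
  rw [Metric.uniformCauchySeqOn_iff]
  intro ε hε
  have hC : 0 < 3 * (|C| + 1) := by positivity
  obtain ⟨y, hxy, hy⟩ := Metric.dense_iff.1 hD x (ε / (3 * (|C| + 1))) (div_pos hε hC)
  obtain ⟨N, hN⟩ := Metric.uniformCauchySeqOn_iff.1 (h y hy) (ε / 3) (by positivity)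
  refine ⟨N, fun k hk l hl i hi => ?_⟩
  have hclose : ∀ j, ‖Q j i x - Q j i y‖ < ε / 3 := fun j => by
    rw [← map_sub]
    calc ‖Q j i (x - y)‖ ≤ |C| * ‖x - y‖ :=
          (Q j i).le_of_opNorm_le ((hQ j i hi).trans (le_abs_self C)) _
      _ ≤ |C| * (ε / (3 * (|C| + 1))) := by
          rw [← dist_eq_norm, dist_comm]
          exact mul_le_mul_of_nonneg_left (Metric.mem_ball.1 hxy).le (abs_nonneg C)
      _ < ε / 3 := by
          rw [mul_div_assoc', div_lt_div_iff₀ hC (by norm_num)]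
          nlinarith [abs_nonneg C]
  calc dist (Q k i x) (Q l i x)
      ≤ dist (Q k i x) (Q k i y) + dist (Q k i y) (Q l i y) + dist (Q l i y) (Q l i x) :=
        dist_triangle4 _ _ _ _
    _ < ε / 3 + ε / 3 + ε / 3 := by
        rw [dist_eq_norm, dist_eq_norm (Q l i y), norm_sub_rev (Q l i y)]
        gcongr
        exacts [hclose k, hN k hk l hl i hi, hclose l]
    _ = ε := by ring

lemma tendsto_apply_of_tendsto_of_norm_le {Q : ℕ → E →L[ℝ] F} {L : E →L[ℝ] F} {C : ℝ}
    (hQ : ∀ k, ‖Q k‖ ≤ C) (hL : ∀ x, Tendsto (fun k => Q k x) atTop (𝓝 (L x)))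
    {y : ℕ → E} {z : E} (hy : Tendsto y atTop (𝓝 z)) :
    Tendsto (fun k => Q k (y k)) atTop (𝓝 (L z)) := by
  rw [tendsto_iff_norm_sub_tendsto_zero]
  have hbound : Tendsto (fun k => C * ‖y k - z‖ + ‖Q k z - L z‖) atTop (𝓝 0) := by
    simpa using ((tendsto_iff_norm_sub_tendsto_zero.1 hy).const_mul C).add
      (tendsto_iff_norm_sub_tendsto_zero.1 (hL z))
  refine squeeze_zero (fun _ => norm_nonneg _) (fun k => ?_) hbound
  calc ‖Q k (y k) - L z‖ = ‖Q k (y k - z) + (Q k z - L z)‖ := by rw [map_sub]; abel_nf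
    _ ≤ C * ‖y k - z‖ + ‖Q k z - L z‖ :=
        (norm_add_le _ _).trans (add_le_add_left ((Q k).le_of_opNorm_le (hQ k) _) _)

end Operators

section LimitSemigroup

variable {E F : Type*} [NormedAddCommGroup E] [NormedSpace ℝ E] [CompleteSpace E]
  [NormedAddCommGroup F] [NormedSpace ℝ F] [CompleteSpace F]

lemma exists_continuousLinearMap_tendsto_of_cauchySeq {Q : ℕ → E →L[ℝ] F}
    (hQ : ∀ x, CauchySeq fun k => Q k x) :
    ∃ L : E →L[ℝ] F, ∀ x, Tendsto (fun k => Q k x) atTop (𝓝 (L x)) :=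
  ⟨continuousLinearMapOfTendsto Q (tendsto_pi_nhds.2 fun x => (hQ x).tendsto_limUnder),
    fun x => (hQ x).tendsto_limUnder⟩

theorem IsC0Semigroup.exists_tendstoUniformlyOn_Icc {S : ℕ → ℝ → E →L[ℝ] E} {M ω : ℝ}
    (hS : ∀ k, IsC0Semigroup (S k)) (hb : ∀ k t, 0 ≤ t → ‖S k t‖ ≤ M * Real.exp (ω * t))
    (hc : ∀ T x, UniformCauchySeqOn (fun k t => S k t x) atTop (Icc 0 T)) :
    ∃ S' : ℝ → E →L[ℝ] E, IsC0Semigroup S' ∧ (∀ t, 0 ≤ t → ‖S' t‖ ≤ M * Real.exp (ω * t)) ∧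
      ∀ T x, TendstoUniformlyOn (fun k t => S k t x) (fun t => S' t x) atTop (Icc 0 T) := by
  have hlim : ∀ t, ∃ L : E →L[ℝ] E, 0 ≤ t →
      ∀ x, Tendsto (fun k => S k t x) atTop (𝓝 (L x)) := by
    intro t
    by_cases ht : 0 ≤ t
    · obtain ⟨L, hL⟩ := exists_continuousLinearMap_tendsto_of_cauchySeq fun x =>
        (hc t x).cauchySeq ⟨ht, le_rfl⟩
      exact ⟨L, fun _ => hL⟩
    · exact ⟨0, fun h => absurd h ht⟩
  choose S' hS' using hlim
  have hunif : ∀ T x, TendstoUniformlyOn (fun k t => S k t x) (fun t => S' t x) atTop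
      (Icc 0 T) := fun T x =>
    (hc T x).tendstoUniformlyOn_of_tendsto fun t ht => hS' t ht.1 x
  have hzero : S' 0 = ContinuousLinearMap.id ℝ E := ContinuousLinearMap.ext fun x =>
    tendsto_nhds_unique (hS' 0 le_rfl x) (by simp [(hS _).apply_zero])
  have hcont : ∀ x, ContinuousOn (fun t => S' t x) (Icc 0 1) := fun x =>
    (hunif 1 x).continuousOn <| Frequently.of_forall fun k =>
      ((hS k).continuousOn_orbit (hb k) x).mono Icc_subset_Ici_self
  refine ⟨S', ⟨hzero, fun s t hs ht => ?_, fun x => ?_⟩, fun t ht => ?_, hunif⟩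
  · refine ContinuousLinearMap.ext fun x => tendsto_nhds_unique (hS' _ (add_nonneg ht hs) x) ?_
    exact (tendsto_apply_of_tendsto_of_norm_le (fun k => hb k t ht) (hS' t ht) (hS' s hs x)).congr
      fun k => ((hS k).apply_add hs ht x).symm
  · simpa [hzero] using ((hcont x) 0 ⟨le_rfl, zero_le_one⟩).tendsto.mono_left
      (nhdsWithin_le_of_mem (Icc_mem_nhdsGT one_pos))
  · exact (S' t).opNorm_le_bound ((norm_nonneg _).trans (hb 0 t ht)) fun x =>
      le_of_tendsto (hS' t ht x).norm <| Eventually.of_forall fun k =>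
        (S k t).le_of_opNorm_le (hb k t ht) x

end LimitSemigroup

namespace GenFeller

variable {X : Type*} {ρ : X → ℝ}

lemma abs_le_rnorm_mul {f : X → ℝ} (hρ : ∀ x, 0 < ρ x) (hf : MemB ρ f) (x : X) :
    |f x| ≤ rnorm ρ f * ρ x := by
  obtain ⟨C, hC⟩ := hf
  have hbdd : BddAbove (range fun y => (ρ y)⁻¹ * |f y|) := by
    refine ⟨C, ?_⟩
    rintro _ ⟨y, rfl⟩
    exact (inv_mul_le_iff₀ (hρ y)).2 ((hC y).trans_eq (mul_comm _ _))
  rw [mul_comm]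
  exact (inv_mul_le_iff₀ (hρ x)).1 (le_csSup hbdd ⟨x, rfl⟩)

lemma nonneg_of_tendsto {Z : Type*} [NormedAddCommGroup Z] {ι : Z → X → ℝ}
    (hρ : ∀ x, 0 < ρ x) (hadd : ∀ f g, ι (f + g) = ι f + ι g) (hmem : ∀ f, MemB ρ (ι f))
    (hnorm : ∀ f, rnorm ρ (ι f) = ‖f‖) {F : ℕ → Z} {g : Z} (hF : Tendsto F atTop (𝓝 g))
    (hpos : ∀ k x, 0 ≤ ι (F k) x) (x : X) : 0 ≤ ι g x := by
  let ev : Z →+ ℝ := AddMonoidHom.mk' (fun f => ι f x) fun f g => by simp [hadd]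
  have hev : Continuous ev := AddMonoidHomClass.continuous_of_bound ev (ρ x) fun f => by
    simpa [ev, hnorm, mul_comm, Real.norm_eq_abs] using abs_le_rnorm_mul hρ (hmem f) x
  exact ge_of_tendsto' ((hev.tendsto g).comp hF) fun k => hpos k x

end GenFeller

theorem approximation_semigroups_general
    {Z : Type v} [NormedAddCommGroup Z] [NormedSpace ℝ Z] [CompleteSpace Z]
    (P : ℕ → ℝ → Z →L[ℝ] Z)
    (hid : ∀ n, P n 0 = ContinuousLinearMap.id ℝ Z)
    (hlaw : ∀ n s t, 0 ≤ s → 0 ≤ t → P n (t + s) = (P n t).comp (P n s))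
    (hcont : ∀ n (f : Z), Tendsto (fun t => P n t f) (nhdsWithin 0 (Set.Ioi 0)) (nhds f))
    (M ω : ℝ)
    (hgb : ∀ n t, 0 ≤ t → ‖P n t‖ ≤ M * Real.exp (ω * t))
    (D : Submodule ℝ Z) (hDdense : Dense (D : Set Z))
    (A : ℕ → Z → Z)
    (hgen : ∀ n, ∀ f ∈ D, Tendsto (fun t : ℝ => t⁻¹ • (P n t f - f))
      (nhdsWithin 0 (Set.Ioi 0)) (nhds (A n f)))
    (hinv : ∀ n t, 0 ≤ t → ∀ f ∈ D, P n t f ∈ D)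
    (nD : Z → ℝ)
    (hnD0 : ∀ f ∈ D, 0 ≤ nD f)
    (MD ωD : ℝ) (hMD : 1 ≤ MD)
    (hgbD : ∀ n t, 0 ≤ t → ∀ f ∈ D, nD (P n t f) ≤ MD * Real.exp (ωD * t) * nD f)
    (a : ℕ → ℕ → ℝ)
    (ha0 : Tendsto (fun p : ℕ × ℕ => a p.1 p.2) atTop (nhds 0))
    (haA : ∀ n m, ∀ f ∈ D, ‖A n f - A m f‖ ≤ a n m * nD f) :
    ∃ Pinf : ℝ → Z →L[ℝ] Z,
      Pinf 0 = ContinuousLinearMap.id ℝ Z ∧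
      (∀ s t, 0 ≤ s → 0 ≤ t → Pinf (t + s) = (Pinf t).comp (Pinf s)) ∧
      (∀ f : Z, Tendsto (fun t => Pinf t f) (nhdsWithin 0 (Set.Ioi 0)) (nhds f)) ∧
      (∀ t, 0 ≤ t → ‖Pinf t‖ ≤ M * Real.exp (ω * t)) ∧
      (∀ f : Z, ∀ T : ℝ, 0 < T → ∀ ε : ℝ, 0 < ε → ∃ N : ℕ, ∀ n ≥ N,
        ∀ t ∈ Set.Icc (0:ℝ) T, ‖P n t f - Pinf t f‖ ≤ ε) ∧
      (∀ T : ℝ, 0 < T → ∀ K : ℝ, 0 < K → ∀ ε : ℝ, 0 < ε → ∃ N : ℕ, ∀ n ≥ N,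
        ∀ f ∈ D, nD f ≤ K → ∀ t ∈ Set.Icc (0:ℝ) T, ‖P n t f - Pinf t f‖ ≤ ε) ∧
      (∃ C : ℝ → ℝ, (∀ T : ℝ, 0 < T → ∃ c : ℝ, ∀ t ∈ Set.Icc (0:ℝ) T, C t ≤ c) ∧
        ∀ n m t, 0 ≤ t → ∀ f ∈ D, ‖P n t f - P m t f‖ ≤ C t * a n m * nD f) ∧
      (∀ (X : Type u) (_ : TopologicalSpace X) (ρ : X → ℝ) (ι : Z → X → ℝ),
        GenFeller.Admissible ρ →
        (∀ f g : Z, ι (f + g) = ι f + ι g) →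
        (∀ (c : ℝ) (f : Z), ι (c • f) = c • ι f) →
        (∀ f : Z, GenFeller.MemCb ρ (ι f)) →
        (∀ f : Z, GenFeller.rnorm ρ (ι f) = ‖f‖) →
        (∀ g : X → ℝ, GenFeller.MemCb ρ g → ∃ f : Z, ι f = g) →
        (∀ n t, 0 ≤ t → ∀ f : Z, (∀ x, 0 ≤ ι f x) → ∀ x, 0 ≤ ι (P n t f) x) →
        ∀ t, 0 ≤ t → ∀ f : Z, (∀ x, 0 ≤ ι f x) → ∀ x, 0 ≤ ι (Pinf t f) x) := by
  have hS : ∀ n, IsC0Semigroup (P n) := fun n => ⟨hid n, hlaw n, hcont n⟩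
  have hM0 : 0 ≤ M := nonneg_of_norm_le_mul_exp (hgb 0)
  have hMD0 : 0 ≤ MD := zero_le_one.trans hMD
  have hkey : ∀ n m t, 0 ≤ t → ∀ f ∈ D,
      ‖P n t f - P m t f‖ ≤ comparisonConst M ω MD ωD t * a n m * nD f :=
    fun n m t ht f hf => (hS n).norm_sub_le_of_generator_dist_le_seminorm (hgb n) (hS m) (hgb m)
      hnD0 hMD0 (hinv n) (hgbD n) (hgen n) (hgen m) (haA n m) ht hf
  have hcauchyD : ∀ T K, UniformCauchySeqOn (fun k (p : Z × ℝ) => P k p.2 p.1) atTop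
      ({f | f ∈ D ∧ nD f ≤ K} ×ˢ Icc 0 T) := fun T K =>
    uniformCauchySeqOn_of_norm_sub_le (by simpa using ha0.abs.const_mul _)
      fun k l p ⟨⟨hf, hfK⟩, ht⟩ => (hkey k l p.2 ht.1 p.1 hf).trans
        (comparisonConst_mul_le hM0 hMD0 ht (hnD0 _ hf) hfK _)
  have hcauchy : ∀ T f, UniformCauchySeqOn (fun k t => P k t f) atTop (Icc 0 T) := fun T =>
    UniformCauchySeqOn.of_dense (fun k t ht => norm_le_mul_exp_abs_of_mem_Icc (hgb k) ht) hDdense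
      fun h hh => ((hcauchyD T (nD h)).comp fun t => (h, t)).mono fun t ht => ⟨⟨hh, le_rfl⟩, ht⟩
  obtain ⟨Pinf, hPinf, hbound, hunif⟩ := IsC0Semigroup.exists_tendstoUniformlyOn_Icc hS hgb hcauchy
  refine ⟨Pinf, hPinf.map_zero, hPinf.map_add, hPinf.tendsto_nhdsGT, hbound,
    fun f T _ ε hε => (hunif T f).exists_forall_norm_sub_le hε, fun T _ K _ ε hε => ?_,
    ⟨comparisonConst M ω MD ωD, fun T _ => ⟨comparisonConst M ω MD ωD T,
      fun t ht => comparisonConst_mono hM0 hMD0 ht⟩, hkey⟩,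
    fun X _ ρ ι hρ hadd _ hmem hnorm _ hpos t ht f hf x => ?_⟩
  · obtain ⟨N, hN⟩ := ((hcauchyD T K).tendstoUniformlyOn_of_tendsto fun p hp =>
      (hunif T p.1).tendsto_at hp.2).exists_forall_norm_sub_le hε
    exact ⟨N, fun n hn f hf hfK t ht => hN n hn (f, t) ⟨⟨hf, hfK⟩, ht⟩⟩
  · exact GenFeller.nonneg_of_tendsto hρ.1 hadd (fun f => (hmem f).1) hnorm
      ((hunif t f).tendsto_at ⟨ht, le_rfl⟩) (fun k => hpos k t ht f hf) x

/-- Theorem 3.1 (approximation of semigroups): given strongly continuous semigroups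
`(P^n_t)` on a Banach space `Z` with uniform growth bound `M exp(ω t)`, a dense
subspace `D ⊆ ∩_n dom(A^n)` invariant under all `P^n` carrying a norm `nD` with a
uniform growth bound, such that `‖A^n f − A^m f‖ ≤ a_{nm} ‖f‖_D` with `a_{nm} → 0`,
there is a strongly continuous limiting semigroup `(P^∞_t)` with the same growth
bound, limit of the `P^n` uniformly on compact time intervals (for each `f ∈ Z`) and
uniformly on bounded sets of `D`, with rate `O(a_{nm})` on `D`.  If moreover
`Z = 𝓑^ρ(X)` for a weighted space `(X, ρ)` and each `P^n` is positive (hence a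
generalized Feller semigroup), then so is the limit. -/
theorem approximation_semigroups
    {Z : Type v} [NormedAddCommGroup Z] [NormedSpace ℝ Z] [CompleteSpace Z]
    (P : ℕ → ℝ → Z →L[ℝ] Z)
    (hid : ∀ n, P n 0 = ContinuousLinearMap.id ℝ Z)
    (hlaw : ∀ n s t, 0 ≤ s → 0 ≤ t → P n (t + s) = (P n t).comp (P n s))
    (hcont : ∀ n (f : Z), Tendsto (fun t => P n t f) (nhdsWithin 0 (Set.Ioi 0)) (nhds f))
    (M ω : ℝ) (hM : 1 ≤ M)
    (hgb : ∀ n t, 0 ≤ t → ‖P n t‖ ≤ M * Real.exp (ω * t))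
    (D : Submodule ℝ Z) (hDdense : Dense (D : Set Z))
    (A : ℕ → Z → Z)
    (hgen : ∀ n, ∀ f ∈ D, Tendsto (fun t : ℝ => t⁻¹ • (P n t f - f))
      (nhdsWithin 0 (Set.Ioi 0)) (nhds (A n f)))
    (hinv : ∀ n t, 0 ≤ t → ∀ f ∈ D, P n t f ∈ D)
    (nD : Z → ℝ)
    (hnD0 : ∀ f ∈ D, 0 ≤ nD f)
    (hnDdef : ∀ f ∈ D, nD f = 0 → f = 0)
    (hnDsmul : ∀ (c : ℝ), ∀ f ∈ D, nD (c • f) = |c| * nD f)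
    (hnDtri : ∀ f ∈ D, ∀ g ∈ D, nD (f + g) ≤ nD f + nD g)
    (MD ωD : ℝ) (hMD : 1 ≤ MD)
    (hgbD : ∀ n t, 0 ≤ t → ∀ f ∈ D, nD (P n t f) ≤ MD * Real.exp (ωD * t) * nD f)
    (a : ℕ → ℕ → ℝ)
    (ha0 : Tendsto (fun p : ℕ × ℕ => a p.1 p.2) atTop (nhds 0))
    (haA : ∀ n m, ∀ f ∈ D, ‖A n f - A m f‖ ≤ a n m * nD f) :
    ∃ Pinf : ℝ → Z →L[ℝ] Z,
      Pinf 0 = ContinuousLinearMap.id ℝ Z ∧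
      (∀ s t, 0 ≤ s → 0 ≤ t → Pinf (t + s) = (Pinf t).comp (Pinf s)) ∧
      (∀ f : Z, Tendsto (fun t => Pinf t f) (nhdsWithin 0 (Set.Ioi 0)) (nhds f)) ∧
      (∀ t, 0 ≤ t → ‖Pinf t‖ ≤ M * Real.exp (ω * t)) ∧
      (∀ f : Z, ∀ T : ℝ, 0 < T → ∀ ε : ℝ, 0 < ε → ∃ N : ℕ, ∀ n ≥ N,
        ∀ t ∈ Set.Icc (0:ℝ) T, ‖P n t f - Pinf t f‖ ≤ ε) ∧
      (∀ T : ℝ, 0 < T → ∀ K : ℝ, 0 < K → ∀ ε : ℝ, 0 < ε → ∃ N : ℕ, ∀ n ≥ N,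
        ∀ f ∈ D, nD f ≤ K → ∀ t ∈ Set.Icc (0:ℝ) T, ‖P n t f - Pinf t f‖ ≤ ε) ∧
      (∃ C : ℝ → ℝ, (∀ T : ℝ, 0 < T → ∃ c : ℝ, ∀ t ∈ Set.Icc (0:ℝ) T, C t ≤ c) ∧
        ∀ n m t, 0 ≤ t → ∀ f ∈ D, ‖P n t f - P m t f‖ ≤ C t * a n m * nD f) ∧
      (∀ (X : Type u) (_ : TopologicalSpace X) (ρ : X → ℝ) (ι : Z → X → ℝ),
        GenFeller.Admissible ρ →
        (∀ f g : Z, ι (f + g) = ι f + ι g) →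
        (∀ (c : ℝ) (f : Z), ι (c • f) = c • ι f) →
        (∀ f : Z, GenFeller.MemCb ρ (ι f)) →
        (∀ f : Z, GenFeller.rnorm ρ (ι f) = ‖f‖) →
        (∀ g : X → ℝ, GenFeller.MemCb ρ g → ∃ f : Z, ι f = g) →
        (∀ n t, 0 ≤ t → ∀ f : Z, (∀ x, 0 ≤ ι f x) → ∀ x, 0 ≤ ι (P n t f) x) →
        ∀ t, 0 ≤ t → ∀ f : Z, (∀ x, 0 ≤ ι f x) → ∀ x, 0 ≤ ι (Pinf t f) x) :=
  approximation_semigroups_general P hid hlaw hcont M ω hgb D hDdense A hgen hinv nD hnD0 MD ωD hMD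
    hgbD a ha0 haA
end
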